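/- Let κ be any integer, let k, k' be positive integers, let n > 1 and 1 ≤ l with 2l ≤ n, let I = {a_1 < ⋯ < a_l} be an l-subset of {1,…,n}, and let τ be a permutation of {1,…,l}. Then, in the field of rational functions ℚ(t_1,…,t_l,z_1,…,z_n), Φ(t,z)·w_I^τ(t,z) = U_I^τ(t,z); in particular, Φ·w_I^τ is a polynomial equal to the displayed product of ∏(l choose 2) strings of length k', l(n−1) strings of length k, and l strings of length k−1. -/

import Mathlib

/-- The "string" (Pochhammer-type) polynomial `[x]_m = ∏_{i=1}^m (x - (i-1)κ)`. -/
noncomputable def str {R : Type*} [CommRing R] (κ : ℤ) (m : ℕ) (x : R) : R :=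
  ∏ i ∈ Finset.range m, (x - (((i : ℤ) * κ : ℤ) : R))

lemma str_map {R S : Type*} [CommRing R] [CommRing S] (f : R →+* S) (κ : ℤ) (m : ℕ) (x : R) :
    f (str κ m x) = str κ m (f x) := by
  simp [str, map_prod]

lemma str_succ {R : Type*} [CommRing R] (κ : ℤ) (m : ℕ) (x : R) :
    str κ (m + 1) x = x * str κ m (x - (κ : R)) := by
  have h : str κ m (x - (κ : R)) = ∏ i ∈ Finset.range m, (x - ((((i + 1 : ℕ) : ℤ)) * κ : ℤ)) := by
    apply Finset.prod_congr rfl; intro i _; push_cast; ring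
  rw [str, Finset.prod_range_succ', h]
  simp [mul_comm]

lemma str_shift {R : Type*} [CommRing R] (κ : ℤ) (m : ℕ) (x : R) :
    str κ m x * (x - ((κ * m : ℤ) : R)) = x * str κ m (x - (κ : R)) := by
  rw [← str_succ, str, str, Finset.prod_range_succ]
  push_cast; ring

lemma str_field {F : Type*} [Field F] (κ : ℤ) (m : ℕ) {x : F} (hx : x ≠ 0) :
    str κ m x * ((x - ((κ * m : ℤ) : F)) / x) = str κ m (x - (κ : F)) := by
  have := str_shift κ m x
  field_simp
  push_cast at this ⊢
  rw [this]

lemma str_inv {F : Type*} [Field F] (κ : ℤ) (m : ℕ) {x : F} (hx : x ≠ 0) :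
    str κ (m + 1) x * x⁻¹ = str κ m (x - (κ : F)) := by
  rw [str_succ, mul_comm x, mul_assoc, mul_inv_cancel₀ hx, mul_one]

/-- The master polynomial
`Φ(t,z) = ∏_{a=1}^n ∏_{i=1}^l [t_i−z_a]_k · ∏_{1≤i<j≤l} [t_i−t_j+1]_{k'}`,
an element of `ℚ[t_1,…,t_l,z_1,…,z_n]`. -/
noncomputable def PhiM (κ : ℤ) (k k' : ℕ) (n l : ℕ) : MvPolynomial (Fin l ⊕ Fin n) ℚ :=
  (∏ a : Fin n, ∏ i : Fin l,
    str κ k (MvPolynomial.X (Sum.inl i) - MvPolynomial.X (Sum.inr a))) *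
  ∏ p ∈ Finset.univ.filter (fun p : Fin l × Fin l => p.1 < p.2),
    str κ k' (MvPolynomial.X (Sum.inl p.1) - MvPolynomial.X (Sum.inl p.2) + 1)

/-- The product of strings `U_I^τ(t,z)` from the statement. -/
noncomputable def UtauF (κ : ℤ) (k k' : ℕ) {n l : ℕ} (I : Finset (Fin n)) (hI : I.card = l)
    (τ : Equiv.Perm (Fin l)) : MvPolynomial (Fin l ⊕ Fin n) ℚ :=
  let t : Fin l → MvPolynomial (Fin l ⊕ Fin n) ℚ := fun i => MvPolynomial.X (Sum.inl i)
  let z : Fin n → MvPolynomial (Fin l ⊕ Fin n) ℚ := fun a => MvPolynomial.X (Sum.inr a)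
  let e : Fin l → Fin n := fun i => ((I.orderIsoOfFin hI) i : Fin n)
  (∏ p ∈ Finset.univ.filter (fun p : Fin l × Fin l => p.1 < p.2 ∧ τ p.1 < τ p.2),
      str κ k' (t p.1 - t p.2 + 1)) *
  (∏ p ∈ Finset.univ.filter (fun p : Fin l × Fin l => p.1 < p.2 ∧ τ p.2 < τ p.1),
      str κ k' (t p.1 - t p.2 + 1 - (κ : MvPolynomial (Fin l ⊕ Fin n) ℚ))) *
  ∏ i : Fin l,
    ((∏ s ∈ Finset.univ.filter (fun s : Fin n => s < e i),
        str κ k (t (τ i) - z s - (κ : MvPolynomial (Fin l ⊕ Fin n) ℚ))) *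
      str κ (k - 1) (t (τ i) - z (e i) - (κ : MvPolynomial (Fin l ⊕ Fin n) ℚ)) *
      (∏ s ∈ Finset.univ.filter (fun s : Fin n => e i < s), str κ k (t (τ i) - z s)))

set_option maxHeartbeats 2000000 in
/-- in the field of rational functions `ℚ(t_1,…,t_l,z_1,…,z_n)` (realized
as the fraction field of the polynomial ring), `Φ(t,z)·w_I^τ(t,z) = U_I^τ(t,z)`, where
`w_I^τ` is the twisted weight function
`(∏_{i<j, τi>τj} (t_i−t_j+1−κk')/(t_i−t_j+1)) ·
 ∏_i [ 1/(t_{τi}−z_{a_i}) · ∏_{j<a_i} (t_{τi}−z_j−κk)/(t_{τi}−z_j) ]`. -/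
theorem stmt7 (κ : ℤ) (k k' : ℕ) (hk0 : 0 < k) (hk'0 : 0 < k')
    (n l : ℕ) (hn : 1 < n) (hl : 1 ≤ l) (hln : 2 * l ≤ n)
    (I : Finset (Fin n)) (hI : I.card = l) (τ : Equiv.Perm (Fin l)) :
    let K := FractionRing (MvPolynomial (Fin l ⊕ Fin n) ℚ)
    let ι : MvPolynomial (Fin l ⊕ Fin n) ℚ →+* K :=
      algebraMap (MvPolynomial (Fin l ⊕ Fin n) ℚ) K
    let t : Fin l → MvPolynomial (Fin l ⊕ Fin n) ℚ := fun i => MvPolynomial.X (Sum.inl i)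
    let z : Fin n → MvPolynomial (Fin l ⊕ Fin n) ℚ := fun a => MvPolynomial.X (Sum.inr a)
    let e : Fin l → Fin n := fun i => ((I.orderIsoOfFin hI) i : Fin n)
    ι (PhiM κ k k' n l) *
      ((∏ p ∈ Finset.univ.filter (fun p : Fin l × Fin l => p.1 < p.2 ∧ τ p.2 < τ p.1),
          ι (t p.1 - t p.2 + 1 - ((κ * k' : ℤ) : MvPolynomial (Fin l ⊕ Fin n) ℚ)) /
            ι (t p.1 - t p.2 + 1)) *
        ∏ i : Fin l,
          ((ι (t (τ i) - z (e i)))⁻¹ *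
            ∏ j ∈ Finset.univ.filter (fun j : Fin n => j < e i),
              ι (t (τ i) - z j - ((κ * k : ℤ) : MvPolynomial (Fin l ⊕ Fin n) ℚ)) /
                ι (t (τ i) - z j))) =
    ι (UtauF κ k k' I hI τ) := by
  intro K ι t z e
  unfold t z e
  obtain ⟨k₀, rfl⟩ : ∃ k₀, k = k₀ + 1 := ⟨k - 1, by omega⟩
  simp only [PhiM, UtauF, map_mul, map_prod, str_map, map_sub, map_add, map_one, map_intCast,
    Nat.add_sub_cancel]
  have hinj : Function.Injective ι :=
    IsFractionRing.injective (MvPolynomial (Fin l ⊕ Fin n) ℚ) K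
  have key1 : ∀ i j : Fin l,
      ι (MvPolynomial.X (Sum.inl i)) - ι (MvPolynomial.X (Sum.inl j)) + 1 ≠ 0 := by
    intro i j h
    have h2 : ι (MvPolynomial.X (Sum.inl i) - MvPolynomial.X (Sum.inl j) + 1) = ι 0 := by
      simp [map_sub, map_add, map_one, h]
    have h3 := hinj h2
    have := congrArg (MvPolynomial.eval (fun _ => (0 : ℚ))) h3
    simp at this
  have key2 : ∀ (i : Fin l) (a : Fin n),
      ι (MvPolynomial.X (Sum.inl i)) - ι (MvPolynomial.X (Sum.inr a)) ≠ 0 := by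
    intro i a h
    have h2 : ι (MvPolynomial.X (Sum.inl i) - MvPolynomial.X (Sum.inr a)) = ι 0 := by
      simp [map_sub, h]
    have h3 := hinj h2
    have := congrArg (MvPolynomial.eval (Sum.elim (fun _ => (1 : ℚ)) (fun _ => 0))) h3
    simp at this
  -- splitting of the set of pairs
  have hsplit : Finset.filter (fun p : Fin l × Fin l => p.1 < p.2) Finset.univ =
      Finset.filter (fun p : Fin l × Fin l => p.1 < p.2 ∧ τ p.1 < τ p.2) Finset.univ ∪
      Finset.filter (fun p : Fin l × Fin l => p.1 < p.2 ∧ τ p.2 < τ p.1) Finset.univ := by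
    ext p
    simp only [Finset.mem_filter, Finset.mem_union, Finset.mem_univ, true_and]
    constructor
    · intro h
      rcases lt_or_gt_of_ne (fun hh : τ p.1 = τ p.2 => (ne_of_lt h) (τ.injective hh)) with h' | h'
      · exact Or.inl ⟨h, h'⟩
      · exact Or.inr ⟨h, h'⟩
    · rintro (⟨h, -⟩ | ⟨h, -⟩) <;> exact h
  have hdisj : Disjoint
      (Finset.filter (fun p : Fin l × Fin l => p.1 < p.2 ∧ τ p.1 < τ p.2) Finset.univ)
      (Finset.filter (fun p : Fin l × Fin l => p.1 < p.2 ∧ τ p.2 < τ p.1) Finset.univ) := by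
    rw [Finset.disjoint_left]
    intro p hp hq
    simp only [Finset.mem_filter, Finset.mem_univ, true_and] at hp hq
    exact absurd hq.2 (not_lt.mpr (le_of_lt hp.2))
  have h1 : (∏ x ∈ Finset.filter (fun p : Fin l × Fin l => p.1 < p.2) Finset.univ,
        str κ k' (ι (MvPolynomial.X (Sum.inl x.1)) - ι (MvPolynomial.X (Sum.inl x.2)) + 1)) *
      (∏ x ∈ Finset.filter (fun p : Fin l × Fin l => p.1 < p.2 ∧ τ p.2 < τ p.1) Finset.univ,
        (ι (MvPolynomial.X (Sum.inl x.1)) - ι (MvPolynomial.X (Sum.inl x.2)) + 1 -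
            ((κ * (k' : ℤ) : ℤ) : K)) /
          (ι (MvPolynomial.X (Sum.inl x.1)) - ι (MvPolynomial.X (Sum.inl x.2)) + 1)) =
      (∏ x ∈ Finset.filter (fun p : Fin l × Fin l => p.1 < p.2 ∧ τ p.1 < τ p.2) Finset.univ,
        str κ k' (ι (MvPolynomial.X (Sum.inl x.1)) - ι (MvPolynomial.X (Sum.inl x.2)) + 1)) *
      ∏ x ∈ Finset.filter (fun p : Fin l × Fin l => p.1 < p.2 ∧ τ p.2 < τ p.1) Finset.univ,
        str κ k' (ι (MvPolynomial.X (Sum.inl x.1)) - ι (MvPolynomial.X (Sum.inl x.2)) + 1 -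
          (κ : K)) := by
    rw [hsplit, Finset.prod_union hdisj, mul_assoc, ← Finset.prod_mul_distrib]
    congr 1
    apply Finset.prod_congr rfl
    intro p _
    exact str_field κ k' (key1 p.1 p.2)
  -- the k-part
  have hA : (∏ a : Fin n, ∏ i : Fin l,
        str κ (k₀ + 1) (ι (MvPolynomial.X (Sum.inl i)) - ι (MvPolynomial.X (Sum.inr a)))) =
      ∏ i : Fin l, ∏ a : Fin n,
        str κ (k₀ + 1) (ι (MvPolynomial.X (Sum.inl (τ i))) - ι (MvPolynomial.X (Sum.inr a))) := by
    rw [Finset.prod_comm]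
    exact (Equiv.prod_comp τ fun i => ∏ a : Fin n,
      str κ (k₀ + 1) (ι (MvPolynomial.X (Sum.inl i)) - ι (MvPolynomial.X (Sum.inr a)))).symm
  have hper : ∀ i : Fin l,
      (∏ a : Fin n,
        str κ (k₀ + 1) (ι (MvPolynomial.X (Sum.inl (τ i))) - ι (MvPolynomial.X (Sum.inr a)))) *
      ((ι (MvPolynomial.X (Sum.inl (τ i))) -
          ι (MvPolynomial.X (Sum.inr ((I.orderIsoOfFin hI) i : Fin n))))⁻¹ *
        ∏ j ∈ Finset.filter (fun j : Fin n => j < ((I.orderIsoOfFin hI) i : Fin n)) Finset.univ,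
          (ι (MvPolynomial.X (Sum.inl (τ i))) - ι (MvPolynomial.X (Sum.inr j)) -
              ((κ * ((k₀ + 1 : ℕ) : ℤ) : ℤ) : K)) /
            (ι (MvPolynomial.X (Sum.inl (τ i))) - ι (MvPolynomial.X (Sum.inr j)))) =
      (∏ s ∈ Finset.filter (fun s : Fin n => s < ((I.orderIsoOfFin hI) i : Fin n)) Finset.univ,
        str κ (k₀ + 1) (ι (MvPolynomial.X (Sum.inl (τ i))) - ι (MvPolynomial.X (Sum.inr s)) -
          (κ : K))) *
      str κ k₀ (ι (MvPolynomial.X (Sum.inl (τ i))) -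
        ι (MvPolynomial.X (Sum.inr ((I.orderIsoOfFin hI) i : Fin n))) - (κ : K)) *
      ∏ s ∈ Finset.filter (fun s : Fin n => ((I.orderIsoOfFin hI) i : Fin n) < s) Finset.univ,
        str κ (k₀ + 1) (ι (MvPolynomial.X (Sum.inl (τ i))) - ι (MvPolynomial.X (Sum.inr s))) := by
    intro i
    set E : Fin n := ((I.orderIsoOfFin hI) i : Fin n) with hE
    have hni : E ∉ Finset.filter (fun s : Fin n => E < s) Finset.univ := by simp
    have hnot : Finset.filter (fun s : Fin n => ¬ s < E) Finset.univ =
        insert E (Finset.filter (fun s : Fin n => E < s) Finset.univ) := by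
      ext a
      simp only [Finset.mem_filter, Finset.mem_univ, true_and, Finset.mem_insert, not_lt]
      constructor
      · intro h
        rcases eq_or_lt_of_le h with h' | h'
        · exact Or.inl h'.symm
        · exact Or.inr h'
      · rintro (rfl | h)
        · exact le_refl _
        · exact le_of_lt h
    have hsplit2 : (∏ a : Fin n,
        str κ (k₀ + 1) (ι (MvPolynomial.X (Sum.inl (τ i))) - ι (MvPolynomial.X (Sum.inr a)))) =
        (∏ a ∈ Finset.filter (fun s : Fin n => s < E) Finset.univ,
          str κ (k₀ + 1) (ι (MvPolynomial.X (Sum.inl (τ i))) - ι (MvPolynomial.X (Sum.inr a)))) *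
        (str κ (k₀ + 1) (ι (MvPolynomial.X (Sum.inl (τ i))) - ι (MvPolynomial.X (Sum.inr E))) *
          ∏ a ∈ Finset.filter (fun s : Fin n => E < s) Finset.univ,
            str κ (k₀ + 1) (ι (MvPolynomial.X (Sum.inl (τ i))) - ι (MvPolynomial.X (Sum.inr a)))) := by
      rw [← Finset.prod_filter_mul_prod_filter_not Finset.univ (fun s : Fin n => s < E), hnot,
        Finset.prod_insert hni]
    have c1 : (∏ a ∈ Finset.filter (fun s : Fin n => s < E) Finset.univ,
          str κ (k₀ + 1) (ι (MvPolynomial.X (Sum.inl (τ i))) - ι (MvPolynomial.X (Sum.inr a)))) *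
        (∏ j ∈ Finset.filter (fun j : Fin n => j < E) Finset.univ,
          (ι (MvPolynomial.X (Sum.inl (τ i))) - ι (MvPolynomial.X (Sum.inr j)) -
              ((κ * ((k₀ + 1 : ℕ) : ℤ) : ℤ) : K)) /
            (ι (MvPolynomial.X (Sum.inl (τ i))) - ι (MvPolynomial.X (Sum.inr j)))) =
        ∏ s ∈ Finset.filter (fun s : Fin n => s < E) Finset.univ,
          str κ (k₀ + 1) (ι (MvPolynomial.X (Sum.inl (τ i))) - ι (MvPolynomial.X (Sum.inr s)) -
            (κ : K)) := by
      rw [← Finset.prod_mul_distrib]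
      apply Finset.prod_congr rfl
      intro a _
      exact str_field κ (k₀ + 1) (key2 (τ i) a)
    have c2 : str κ (k₀ + 1)
          (ι (MvPolynomial.X (Sum.inl (τ i))) - ι (MvPolynomial.X (Sum.inr E))) *
        (ι (MvPolynomial.X (Sum.inl (τ i))) - ι (MvPolynomial.X (Sum.inr E)))⁻¹ =
        str κ k₀ (ι (MvPolynomial.X (Sum.inl (τ i))) - ι (MvPolynomial.X (Sum.inr E)) - (κ : K)) :=
      str_inv κ k₀ (key2 (τ i) E)
    rw [hsplit2, ← c1, ← c2]
    ring
  have h2 : (∏ a : Fin n, ∏ i : Fin l,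
        str κ (k₀ + 1) (ι (MvPolynomial.X (Sum.inl i)) - ι (MvPolynomial.X (Sum.inr a)))) *
      (∏ i : Fin l,
        (ι (MvPolynomial.X (Sum.inl (τ i))) -
            ι (MvPolynomial.X (Sum.inr ((I.orderIsoOfFin hI) i : Fin n))))⁻¹ *
          ∏ j ∈ Finset.filter (fun j : Fin n => j < ((I.orderIsoOfFin hI) i : Fin n)) Finset.univ,
            (ι (MvPolynomial.X (Sum.inl (τ i))) - ι (MvPolynomial.X (Sum.inr j)) -
                ((κ * ((k₀ + 1 : ℕ) : ℤ) : ℤ) : K)) /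
              (ι (MvPolynomial.X (Sum.inl (τ i))) - ι (MvPolynomial.X (Sum.inr j)))) =
      ∏ i : Fin l,
        (∏ s ∈ Finset.filter (fun s : Fin n => s < ((I.orderIsoOfFin hI) i : Fin n)) Finset.univ,
          str κ (k₀ + 1) (ι (MvPolynomial.X (Sum.inl (τ i))) - ι (MvPolynomial.X (Sum.inr s)) -
            (κ : K))) *
        str κ k₀ (ι (MvPolynomial.X (Sum.inl (τ i))) -
          ι (MvPolynomial.X (Sum.inr ((I.orderIsoOfFin hI) i : Fin n))) - (κ : K)) *
        ∏ s ∈ Finset.filter (fun s : Fin n => ((I.orderIsoOfFin hI) i : Fin n) < s) Finset.univ,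
          str κ (k₀ + 1) (ι (MvPolynomial.X (Sum.inl (τ i))) - ι (MvPolynomial.X (Sum.inr s))) := by
    rw [hA, ← Finset.prod_mul_distrib]
    exact Finset.prod_congr rfl fun i _ => hper i
  rw [← h1, ← h2]
  ring
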